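/- For n ≥ 18, the spectral radius of the graph K_n \ E(S_{n−4} ∪ K_3) is strictly less than the spectral radius of K_n \ E(S_{n−3}). -/

import Mathlib

/-- `K_n \ E(S_{n-3})`: the complete graph on `n` vertices minus the edges of a star
`S_{n-3}` with center `0` and leaves `1, …, n-4`. -/
def KnDelS (n : ℕ) : SimpleGraph (Fin n) :=
  ⊤ \ SimpleGraph.fromRel (fun u v => u.val = 0 ∧ 1 ≤ v.val ∧ v.val ≤ n - 4)

/-- `K_n \ E(S_{n-4} ∪ S_4)`: the complete graph on `n` vertices minus the edges of a star
`S_{n-4}` (center `0`, leaves `1, …, n-5`) and of a disjoint star `S_4` (center `n-4`,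
leaves `n-3, n-2, n-1`). -/
def KnDelSS (n : ℕ) : SimpleGraph (Fin n) :=
  ⊤ \ SimpleGraph.fromRel (fun u v =>
    (u.val = 0 ∧ 1 ≤ v.val ∧ v.val ≤ n - 5) ∨ (u.val = n - 4 ∧ n - 3 ≤ v.val))

/-- `K_n \ E(S_{n-4} ∪ K_3)`: the complete graph on `n` vertices minus the edges of a star
`S_{n-4}` (center `0`, leaves `1, …, n-5`) and of a disjoint triangle `K_3` on
`{n-3, n-2, n-1}`. -/
def KnDelSK (n : ℕ) : SimpleGraph (Fin n) :=
  ⊤ \ SimpleGraph.fromRel (fun u v =>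
    (u.val = 0 ∧ 1 ≤ v.val ∧ v.val ≤ n - 5) ∨ (n - 3 ≤ u.val ∧ n - 3 ≤ v.val))

/-- The spectral radius of a finite graph: the largest (real) eigenvalue of its
adjacency matrix, expressed as the supremum of the real spectrum. -/
noncomputable def specRad {V : Type*} [Fintype V] [DecidableEq V] (G : SimpleGraph V) : ℝ :=
  letI := Classical.decRel G.Adj
  sSup (spectrum ℝ (G.adjMatrix ℝ))

/-! Both spectral radii are compared with `n - 2`. Split the vertices into the classes `{0}`,
`{1, …, n-5}`, `{n-4}` and `{n-3, n-2, n-1}`. In both graphs adjacency of distinct vertices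
depends only on their classes, so the adjacency matrix maps a vector that is constant on classes
to the class vector obtained from the 4 × 4 quotient matrix of this equitable partition.
For a symmetric nonnegative matrix, a positive `v` with `A v ≤ r v` gives `μ ≤ r`
(Collatz–Wielandt), and a nonzero nonnegative `w` with `r w ≤ A w` gives `r ≤ μ` (Rayleigh).
The indicator of the non-central vertices gives `μ(K_n \ E(S_{n-3})) ≥ n - 2`, and the class
vector `(8n + 8, 2n² - 8, 2n², 2n² - 3n - 12)` gives `μ(K_n \ E(S_{n-4} ∪ K_3)) ≤ n - 2 - 4/n`
as soon as `n ≥ 15`. -/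

open Matrix Finset

namespace Matrix

variable {ι : Type*} [Fintype ι]

theorem exists_mulVec_eq_smul_of_mem_spectrum [DecidableEq ι] {A : Matrix ι ι ℝ} {μ : ℝ}
    (h : μ ∈ spectrum ℝ A) : ∃ x : ι → ℝ, x ≠ 0 ∧ A *ᵥ x = μ • x := by
  rw [← AlgEquiv.spectrum_eq (toLinAlgEquiv' (R := ℝ) (n := ι)),
    ← Module.End.hasEigenvalue_iff_mem_spectrum] at h
  obtain ⟨x, hx, hx0⟩ := h.exists_hasEigenvector
  exact ⟨x, hx0, by simpa [toLinAlgEquiv'_apply] using Module.End.mem_eigenspace_iff.mp hx⟩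

theorem IsHermitian.dotProduct_mulVec_le_sSup_spectrum_mul [DecidableEq ι] {A : Matrix ι ι ℝ}
    (hA : A.IsHermitian) (w : ι → ℝ) :
    w ⬝ᵥ A *ᵥ w ≤ sSup (spectrum ℝ A) * (w ⬝ᵥ w) := by
  set μ := sSup (spectrum ℝ A)
  have hpsd : (algebraMap ℝ (Matrix ι ι ℝ) μ - A).PosSemidef := by
    refine posSemidef_iff_isHermitian_and_spectrum_nonneg.mpr ⟨?_, ?_⟩
    · rw [Algebra.algebraMap_eq_smul_one]
      exact (isHermitian_one.smul (IsSelfAdjoint.all μ)).sub hA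
    rw [← spectrum.singleton_sub_eq]
    rintro _ ⟨_, rfl, x, hx, rfl⟩
    exact sub_nonneg.mpr (le_csSup A.finite_real_spectrum.bddAbove hx)
  have := hpsd.dotProduct_mulVec_nonneg w
  rwa [Algebra.algebraMap_eq_smul_one, star_trivial, sub_mulVec, smul_mulVec, one_mulVec,
    dotProduct_sub, dotProduct_smul, smul_eq_mul, sub_nonneg] at this

theorem smul_abs_le_mulVec_abs {A : Matrix ι ι ℝ} (hA0 : ∀ i j, 0 ≤ A i j) {μ : ℝ}
    {x : ι → ℝ} (hx : A *ᵥ x = μ • x) : μ • |x| ≤ A *ᵥ |x| := fun i => by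
  calc μ * |x i| ≤ |μ * x i| := by rw [abs_mul]; gcongr; exact le_abs_self μ
    _ = |∑ j, A i j * x j| := by rw [← smul_eq_mul, ← Pi.smul_apply, ← hx]; rfl
    _ ≤ ∑ j, A i j * |x j| := by
      refine (abs_sum_le_sum_abs _ _).trans_eq (sum_congr rfl fun j _ => ?_)
      rw [abs_mul, abs_of_nonneg (hA0 i j)]

theorem IsSymm.sSup_spectrum_le_of_mulVec_le [DecidableEq ι] [Nonempty ι] {A : Matrix ι ι ℝ}
    (hA : A.IsSymm) (hA0 : ∀ i j, 0 ≤ A i j) {v : ι → ℝ} (hv : ∀ i, 0 < v i) {r : ℝ}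
    (hAv : A *ᵥ v ≤ r • v) : sSup (spectrum ℝ A) ≤ r := by
  obtain ⟨i⟩ := ‹Nonempty ι›
  have hr : 0 ≤ r := by
    have : 0 ≤ r * v i := (sum_nonneg fun j _ => mul_nonneg (hA0 i j) (hv j).le).trans (hAv i)
    exact nonneg_of_mul_nonneg_left this (hv i)
  refine Real.sSup_le (fun μ hμ => ?_) hr
  obtain ⟨x, hx0, hx⟩ := exists_mulVec_eq_smul_of_mem_spectrum hμ
  have hpos : 0 < v ⬝ᵥ |x| := by
    obtain ⟨k, hk⟩ := Function.ne_iff.mp hx0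
    exact sum_pos' (fun j _ => mul_nonneg (hv j).le (abs_nonneg _))
      ⟨k, mem_univ _, mul_pos (hv k) (abs_pos.mpr hk)⟩
  refine le_of_mul_le_mul_right ?_ hpos
  calc μ * (v ⬝ᵥ |x|) = v ⬝ᵥ (μ • |x|) := by rw [dotProduct_smul, smul_eq_mul]
    _ ≤ v ⬝ᵥ (A *ᵥ |x|) :=
      dotProduct_le_dotProduct_of_nonneg_left (smul_abs_le_mulVec_abs hA0 hx) fun j => (hv j).le
    _ = (A *ᵥ v) ⬝ᵥ |x| := by rw [dotProduct_mulVec, ← mulVec_transpose, hA.eq]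
    _ ≤ (r • v) ⬝ᵥ |x| := dotProduct_le_dotProduct_of_nonneg_right hAv (abs_nonneg x)
    _ = r * (v ⬝ᵥ |x|) := by rw [smul_dotProduct, smul_eq_mul]

end Matrix

namespace SimpleGraph

variable {V : Type*} [Fintype V] [DecidableEq V] (G : SimpleGraph V) [DecidableRel G.Adj]

theorem specRad_eq_sSup_spectrum : specRad G = sSup (spectrum ℝ (G.adjMatrix ℝ)) := by
  unfold specRad; congr

theorem specRad_le_of_adjMatrix_mulVec_le [Nonempty V] {v : V → ℝ} (hv : ∀ i, 0 < v i)
    {r : ℝ} (h : G.adjMatrix ℝ *ᵥ v ≤ r • v) : specRad G ≤ r := by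
  rw [specRad_eq_sSup_spectrum]
  exact G.isSymm_adjMatrix.sSup_spectrum_le_of_mulVec_le
    (fun i j => by by_cases hij : G.Adj i j <;> simp [hij]) hv h

theorem le_specRad_of_le_adjMatrix_mulVec {w : V → ℝ} (hw : 0 ≤ w) (hw0 : w ≠ 0) {r : ℝ}
    (h : r • w ≤ G.adjMatrix ℝ *ᵥ w) : r ≤ specRad G := by
  have hpos : 0 < w ⬝ᵥ w := by
    obtain ⟨k, hk⟩ := Function.ne_iff.mp hw0
    exact sum_pos' (fun j _ => mul_self_nonneg (w j)) ⟨k, mem_univ _, mul_self_pos.mpr hk⟩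
  have hA : (G.adjMatrix ℝ).IsHermitian := isHermitian_iff_isSymm.mpr G.isSymm_adjMatrix
  refine le_of_mul_le_mul_right ?_ hpos
  calc r * (w ⬝ᵥ w) = w ⬝ᵥ (r • w) := by rw [dotProduct_smul, smul_eq_mul]
    _ ≤ w ⬝ᵥ (G.adjMatrix ℝ *ᵥ w) := dotProduct_le_dotProduct_of_nonneg_left h hw
    _ ≤ specRad G * (w ⬝ᵥ w) := by
      rw [specRad_eq_sSup_spectrum]; exact hA.dotProduct_mulVec_le_sSup_spectrum_mul w

variable {G}

theorem adjMatrix_mulVec_comp_apply {κ : Type*} {c : V → κ} {Q : κ → κ → Prop}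
    [DecidableRel Q] (hG : ∀ i j, G.Adj i j ↔ i ≠ j ∧ Q (c i) (c j)) (g : κ → ℝ) (i : V) :
    (G.adjMatrix ℝ *ᵥ (g ∘ c)) i =
      (∑ j, if Q (c i) (c j) then g (c j) else 0) - if Q (c i) (c i) then g (c i) else 0 := by
  have hentry : ∀ j, G.adjMatrix ℝ i j * g (c j) = (if Q (c i) (c j) then g (c j) else 0) -
      if i = j then (if Q (c i) (c j) then g (c j) else 0) else 0 := fun j => by
    by_cases hij : i = j
    · subst hij; simp
    · simp [hG, hij]
  simp only [mulVec, dotProduct, Function.comp_apply, hentry, sum_sub_distrib, sum_ite_eq,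
    mem_univ, if_true]

end SimpleGraph

def vertexClass (n k : ℕ) : Fin 4 :=
  if k = 0 then 0 else if k ≤ n - 5 then 1 else if k = n - 4 then 2 else 3

def classSize (n : ℕ) : Fin 4 → ℝ := ![1, n - 5, 1, 3]

theorem sum_vertexClass {n : ℕ} (hn : 5 ≤ n) (F : Fin 4 → ℝ) :
    ∑ i : Fin n, F (vertexClass n i) = ∑ b, classSize n b * F b := by
  have hconst : ∀ {a b : ℕ} (c : Fin 4), (∀ k, a ≤ k → k < b → vertexClass n k = c) →
      ∑ k ∈ Ico a b, F (vertexClass n k) = ((b - a : ℕ) : ℝ) * F c := fun c h => by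
    rw [sum_congr rfl fun k hk => by rw [h k (mem_Ico.1 hk).1 (mem_Ico.1 hk).2], sum_const,
      Nat.card_Ico, nsmul_eq_mul]
  rw [Fin.sum_univ_eq_sum_range (fun k => F (vertexClass n k)), range_eq_Ico,
    ← sum_Ico_consecutive _ (Nat.zero_le _) (by omega : n - 3 ≤ n),
    ← sum_Ico_consecutive _ (Nat.zero_le _) (by omega : n - 4 ≤ n - 3),
    ← sum_Ico_consecutive _ (Nat.zero_le _) (by omega : 1 ≤ n - 4),
    hconst 0, hconst 1, hconst 2, hconst 3, show n - 4 - 1 = n - 5 by omega,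
    show n - 3 - (n - 4) = 1 by omega, show n - (n - 3) = 3 by omega, Nat.cast_sub hn]
  · simp [Fin.sum_univ_four, classSize]
  all_goals intro k hk1 hk2; simp only [vertexClass]; split_ifs <;> first | rfl | omega

/-- Entry `(a, b)` counts the neighbours in class `b` of a vertex of class `a`, in a graph on
`Fin n` in which distinct vertices of classes `a'`, `b'` are adjacent unless `D a' b'`. -/
def quotientMatrix (n : ℕ) (D : Fin 4 → Fin 4 → Prop) [DecidableRel D] :
    Matrix (Fin 4) (Fin 4) ℝ :=
  fun a b => (if D a b then 0 else classSize n b) - if a = b ∧ ¬ D a a then 1 else 0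

theorem adjMatrix_mulVec_vertexClass {n : ℕ} (hn : 5 ≤ n) {G : SimpleGraph (Fin n)}
    [DecidableRel G.Adj] {D : Fin 4 → Fin 4 → Prop} [DecidableRel D]
    (hG : ∀ i j, G.Adj i j ↔ i ≠ j ∧ ¬ D (vertexClass n i) (vertexClass n j)) (g : Fin 4 → ℝ)
    (i : Fin n) :
    (G.adjMatrix ℝ *ᵥ fun j => g (vertexClass n j)) i =
      (quotientMatrix n D *ᵥ g) (vertexClass n i) := by
  refine (SimpleGraph.adjMatrix_mulVec_comp_apply (c := fun j : Fin n => vertexClass n j)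
    (Q := fun a b => ¬ D a b) hG g i).trans ?_
  rw [sum_vertexClass hn (fun b => if ¬ D (vertexClass n i) b then g b else 0)]
  simp only [mulVec, dotProduct, quotientMatrix, Fin.sum_univ_four, classSize]
  generalize vertexClass n i = a
  fin_cases a <;> simp <;> split_ifs <;> ring

def deletedClassesS (a b : Fin 4) : Prop := a = 0 ∧ (b = 1 ∨ b = 2) ∨ b = 0 ∧ (a = 1 ∨ a = 2)

def deletedClassesSK (a b : Fin 4) : Prop := a = 0 ∧ b = 1 ∨ a = 1 ∧ b = 0 ∨ a = 3 ∧ b = 3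

instance : DecidableRel deletedClassesS := fun _ _ => inferInstanceAs (Decidable (_ ∨ _))

instance : DecidableRel deletedClassesSK := fun _ _ => inferInstanceAs (Decidable (_ ∨ _))

theorem KnDelS_adj {n : ℕ} (i j : Fin n) :
    (KnDelS n).Adj i j ↔ i ≠ j ∧ ¬ deletedClassesS (vertexClass n i) (vertexClass n j) := by
  simp only [KnDelS, SimpleGraph.sdiff_adj, SimpleGraph.top_adj, SimpleGraph.fromRel_adj,
    deletedClassesS, vertexClass, ne_eq, Fin.ext_iff]
  split_ifs <;> simp <;> omega

theorem KnDelSK_adj {n : ℕ} (hn : 5 ≤ n) (i j : Fin n) :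
    (KnDelSK n).Adj i j ↔ i ≠ j ∧ ¬ deletedClassesSK (vertexClass n i) (vertexClass n j) := by
  simp only [KnDelSK, SimpleGraph.sdiff_adj, SimpleGraph.top_adj, SimpleGraph.fromRel_adj,
    deletedClassesSK, vertexClass, ne_eq, Fin.ext_iff]
  split_ifs <;> simp <;> omega

theorem sub_two_le_specRad_KnDelS {n : ℕ} (hn : 5 ≤ n) : (n : ℝ) - 2 ≤ specRad (KnDelS n) := by
  classical
  set g : Fin 4 → ℝ := ![0, 1, 1, 1]
  have hnonneg : ∀ a, 0 ≤ g a := fun a => by fin_cases a <;> simp [g]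
  have hrow : ∀ a, ((n : ℝ) - 2) * g a ≤ (quotientMatrix n deletedClassesS *ᵥ g) a := fun a => by
    fin_cases a <;>
      simp [g, quotientMatrix, mulVec, dotProduct, Fin.sum_univ_four, classSize,
        deletedClassesS] <;>
      linarith
  have hlast : vertexClass n (n - 1) = 3 := by
    simp only [vertexClass]; split_ifs <;> first | rfl | omega
  refine (KnDelS n).le_specRad_of_le_adjMatrix_mulVec (w := fun j => g (vertexClass n j))
    (fun j => hnonneg _) (Function.ne_iff.mpr ⟨⟨n - 1, by omega⟩, by simp [hlast, g]⟩)
    fun i => ?_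
  rw [adjMatrix_mulVec_vertexClass hn KnDelS_adj]
  exact hrow _

theorem specRad_KnDelSK_le {n : ℕ} (hn : 15 ≤ n) :
    specRad (KnDelSK n) ≤ ((n : ℝ) ^ 2 - 2 * n - 4) / n := by
  classical
  have hn' : (15 : ℝ) ≤ n := by exact_mod_cast hn
  set g : Fin 4 → ℝ := ![8 * n + 8, 2 * n ^ 2 - 8, 2 * n ^ 2, 2 * n ^ 2 - 3 * n - 12]
  have hpos : ∀ a, 0 < g a := fun a => by fin_cases a <;> simp [g] <;> nlinarith
  have hrow : ∀ a, (quotientMatrix n deletedClassesSK *ᵥ g) a ≤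
      ((n : ℝ) ^ 2 - 2 * n - 4) / n * g a := fun a => by
    rw [div_mul_eq_mul_div, le_div_iff₀ (by positivity)]
    fin_cases a <;>
      simp [g, quotientMatrix, mulVec, dotProduct, Fin.sum_univ_four, classSize,
        deletedClassesSK] <;>
      nlinarith [mul_nonneg (sub_nonneg.2 hn') (sub_nonneg.2 hn')]
  have : Nonempty (Fin n) := ⟨⟨0, by omega⟩⟩
  refine (KnDelSK n).specRad_le_of_adjMatrix_mulVec_le (v := fun j => g (vertexClass n j))
    (fun j => hpos _) fun i => ?_
  rw [adjMatrix_mulVec_vertexClass (by omega) (KnDelSK_adj (by omega))]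
  exact hrow _

/-- For `n ≥ 18`, `μ(K_n \ E(S_{n−4} ∪ K_3)) < μ(K_n \ E(S_{n−3}))`. -/
theorem stmt11 (n : ℕ) (hn : 18 ≤ n) :
    specRad (KnDelSK n) < specRad (KnDelS n) := by
  have hn' : (18 : ℝ) ≤ n := by exact_mod_cast hn
  calc specRad (KnDelSK n) ≤ ((n : ℝ) ^ 2 - 2 * n - 4) / n := specRad_KnDelSK_le (by omega)
    _ < n - 2 := by rw [div_lt_iff₀ (by positivity)]; nlinarith
    _ ≤ specRad (KnDelS n) := sub_two_le_specRad_KnDelS (by omega)
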